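/- Every good local semigroup S ⊆ ℕ^n has a unique minimal good generating system: if A and B are both minimal good generating systems for S (contained in B(C) = { x : x ≤ C }), then A = B. -/

import Mathlib

/-- A good semigroup of `ℕ^n`: a submonoid satisfying (G1), (G2), (G3). -/
def IsGoodSemigroup {n : ℕ} (S : Set (Fin n → ℕ)) : Prop :=
  0 ∈ S ∧ (∀ a ∈ S, ∀ b ∈ S, a + b ∈ S) ∧
  (∀ a ∈ S, ∀ b ∈ S, a ⊓ b ∈ S) ∧
  (∀ a ∈ S, ∀ b ∈ S, ∀ i, a i = b i →
    ∃ c ∈ S, a i < c i ∧ (∀ j, j ≠ i → min (a j) (b j) ≤ c j) ∧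
      (∀ j, j ≠ i → a j ≠ b j → c j = min (a j) (b j))) ∧
  (∃ C, ∀ x, C ≤ x → x ∈ S)

/-- `C` is the conductor of `S ⊆ ℕ^n`. -/
def IsConductor {n : ℕ} (S : Set (Fin n → ℕ)) (C : Fin n → ℕ) : Prop :=
  (∀ x, C ≤ x → x ∈ S) ∧ ∀ C', (∀ x, C' ≤ x → x ∈ S) → C ≤ C'

/-- `S` is local: its only element on the axes is `0`. -/
def IsLocal {n : ℕ} (S : Set (Fin n → ℕ)) : Prop :=
  ∀ a ∈ S, (∃ i, a i = 0) → a = 0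

/-- `[G]`: the smallest submonoid of `ℕ^n` containing `G` closed under componentwise infima. -/
def goodClosure {n : ℕ} (G : Set (Fin n → ℕ)) : Set (Fin n → ℕ) :=
  ⋂₀ {M | G ⊆ M ∧ 0 ∈ M ∧ (∀ a ∈ M, ∀ b ∈ M, a + b ∈ M) ∧ ∀ a ∈ M, ∀ b ∈ M, a ⊓ b ∈ M}

/-- `[G]_C = C ⊓ [G]`. -/
def goodClosureBd {n : ℕ} (G : Set (Fin n → ℕ)) (C : Fin n → ℕ) : Set (Fin n → ℕ) :=
  (fun x => C ⊓ x) '' goodClosure G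

/-- `G` is a good generating system for `S` (with conductor `C`): `[G]_C = Small(S)`. -/
def IsGoodGenSys {n : ℕ} (S : Set (Fin n → ℕ)) (C : Fin n → ℕ) (G : Set (Fin n → ℕ)) : Prop :=
  goodClosureBd G C = {a ∈ S | a ≤ C}

/-!
`truncClosure C G` is `[G]_C = C ⊓ [G]`, generated from `0` and the `C ⊓ g`, `g ∈ G`, by `⊓` and
truncated addition `(a, b) ↦ C ⊓ (a + b)`.

If the nonzero elements of `[G]_C` are positive and `x ∈ [[G]_C \ {x}]_C`, then `x` can be dropped
from `G`; for a minimal `A` and `a ∈ A \ B` this contradicts minimality, so `A ⊆ B`. To get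
`x ∈ [G \ {x}]_C`, write every `s ∈ [G]_C` as `h ⊓ w` with `h ∈ [G \ {x}]_C ∪ {C}` and `w` either
`x` or above `x` wherever `x < C` (`InfSplit`). A shortest expression of `x` over `[G]_C \ {x}`
ends with a truncated sum or an infimum of two elements other than `x`; comparing coordinates
(using positivity for the sum) shows that `x` is the same combination of their `h`-parts.
-/

variable {n : ℕ}

inductive truncClosure (C : Fin n → ℕ) (G : Set (Fin n → ℕ)) : Set (Fin n → ℕ)
  | of_mem {a : Fin n → ℕ} : a ∈ G → truncClosure C G (C ⊓ a)
  | zero : truncClosure C G 0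
  | add {a b : Fin n → ℕ} : truncClosure C G a → truncClosure C G b → truncClosure C G (C ⊓ (a + b))
  | inf {a b : Fin n → ℕ} : truncClosure C G a → truncClosure C G b → truncClosure C G (a ⊓ b)

section truncClosure

variable {C : Fin n → ℕ} {G G' : Set (Fin n → ℕ)}

theorem le_of_mem_truncClosure {a : Fin n → ℕ} (ha : a ∈ truncClosure C G) : a ≤ C := by
  induction ha with
  | of_mem => exact inf_le_left
  | zero => exact zero_le
  | add => exact inf_le_left
  | inf _ _ iha => exact inf_le_of_left_le iha

theorem mem_truncClosure_of_mem_of_le {a : Fin n → ℕ} (ha : a ∈ G) (haC : a ≤ C) :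
    a ∈ truncClosure C G := by
  have h := truncClosure.of_mem (C := C) ha
  rwa [inf_eq_right.mpr haC] at h

theorem truncClosure_subset_truncClosure (h : ∀ g ∈ G, C ⊓ g ∈ truncClosure C G') :
    truncClosure C G ⊆ truncClosure C G' := by
  intro a ha
  induction ha with
  | of_mem hg => exact h _ hg
  | zero => exact .zero
  | add _ _ iha ihb => exact .add iha ihb
  | inf _ _ iha ihb => exact .inf iha ihb

theorem truncClosure_mono (h : G ⊆ G') : truncClosure C G ⊆ truncClosure C G' :=
  truncClosure_subset_truncClosure fun _ hg => .of_mem (h hg)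

theorem truncClosure_truncClosure : truncClosure C (truncClosure C G) = truncClosure C G := by
  refine subset_antisymm (truncClosure_subset_truncClosure fun g hg => ?_) fun a ha =>
    mem_truncClosure_of_mem_of_le ha (le_of_mem_truncClosure ha)
  rwa [inf_eq_right.mpr (le_of_mem_truncClosure hg)]

end truncClosure

section goodClosure

variable {G : Set (Fin n → ℕ)}

theorem subset_goodClosure : G ⊆ goodClosure G :=
  fun _ ha _ hM => hM.1 ha

theorem zero_mem_goodClosure : (0 : Fin n → ℕ) ∈ goodClosure G :=
  fun _ hM => hM.2.1

theorem add_mem_goodClosure {a b : Fin n → ℕ} (ha : a ∈ goodClosure G) (hb : b ∈ goodClosure G) :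
    a + b ∈ goodClosure G :=
  fun M hM => hM.2.2.1 a (ha M hM) b (hb M hM)

theorem inf_mem_goodClosure {a b : Fin n → ℕ} (ha : a ∈ goodClosure G) (hb : b ∈ goodClosure G) :
    a ⊓ b ∈ goodClosure G :=
  fun M hM => hM.2.2.2 a (ha M hM) b (hb M hM)

theorem inf_inf_add_inf_eq_inf_add (C a b : Fin n → ℕ) : C ⊓ (C ⊓ a + C ⊓ b) = C ⊓ (a + b) := by
  funext i
  simp only [Pi.inf_apply, Pi.add_apply]
  omega

theorem inf_mem_truncClosure_of_mem_goodClosure {C m : Fin n → ℕ} (hm : m ∈ goodClosure G) :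
    C ⊓ m ∈ truncClosure C G := by
  have hclosed : {m | C ⊓ m ∈ truncClosure C G} ∈
      {M | G ⊆ M ∧ 0 ∈ M ∧ (∀ a ∈ M, ∀ b ∈ M, a + b ∈ M) ∧ ∀ a ∈ M, ∀ b ∈ M, a ⊓ b ∈ M} := by
    refine ⟨fun g hg => .of_mem hg, ?_, fun a ha b hb => ?_, fun a ha b hb => ?_⟩
    · show C ⊓ 0 ∈ truncClosure C G
      rw [inf_eq_right.mpr zero_le]
      exact .zero
    · show C ⊓ (a + b) ∈ truncClosure C G
      rw [← inf_inf_add_inf_eq_inf_add]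
      exact .add ha hb
    · show C ⊓ (a ⊓ b) ∈ truncClosure C G
      rw [inf_inf_distrib_left]
      exact .inf ha hb
  exact Set.sInter_subset_of_mem hclosed hm

theorem goodClosureBd_eq_truncClosure (C : Fin n → ℕ) : goodClosureBd G C = truncClosure C G := by
  refine subset_antisymm ?_ fun a ha => ?_
  · rintro _ ⟨m, hm, rfl⟩
    exact inf_mem_truncClosure_of_mem_goodClosure hm
  induction ha with
  | of_mem hg => exact ⟨_, subset_goodClosure hg, rfl⟩
  | zero => exact ⟨0, zero_mem_goodClosure, inf_eq_right.mpr zero_le⟩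
  | add _ _ iha ihb =>
    obtain ⟨a, ha, rfl⟩ := iha
    obtain ⟨b, hb, rfl⟩ := ihb
    exact ⟨a + b, add_mem_goodClosure ha hb, (inf_inf_add_inf_eq_inf_add C a b).symm⟩
  | inf _ _ iha ihb =>
    obtain ⟨a, ha, rfl⟩ := iha
    obtain ⟨b, hb, rfl⟩ := ihb
    exact ⟨a ⊓ b, inf_mem_goodClosure ha hb, inf_inf_distrib_left C a b⟩

end goodClosure

section removal

variable {C x : Fin n → ℕ} {G : Set (Fin n → ℕ)}

theorem exists_eq_truncAdd_or_inf_of_mem_truncClosure {T : Set (Fin n → ℕ)}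
    (hx : x ∈ truncClosure C T) (hx0 : x ≠ 0) (hxT : ∀ t ∈ T, C ⊓ t ≠ x) :
    ∃ s₁ ∈ truncClosure C T, ∃ s₂ ∈ truncClosure C T, s₁ ≠ x ∧ s₂ ≠ x ∧
      (x = C ⊓ (s₁ + s₂) ∨ x = s₁ ⊓ s₂) := by
  suffices ∀ s ∈ truncClosure C T, s = x → ∃ s₁ ∈ truncClosure C T, ∃ s₂ ∈ truncClosure C T,
      s₁ ≠ x ∧ s₂ ≠ x ∧ (x = C ⊓ (s₁ + s₂) ∨ x = s₁ ⊓ s₂) from this x hx rfl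
  intro s hs
  induction hs with
  | of_mem ht => exact fun h => absurd h (hxT _ ht)
  | zero => exact fun h => absurd h.symm hx0
  | @add a b ha hb iha ihb =>
    intro hs
    by_cases hax : a = x
    · exact iha hax
    by_cases hbx : b = x
    · exact ihb hbx
    exact ⟨a, ha, b, hb, hax, hbx, .inl hs.symm⟩
  | @inf a b ha hb iha ihb =>
    intro hs
    by_cases hax : a = x
    · exact iha hax
    by_cases hbx : b = x
    · exact ihb hbx
    exact ⟨a, ha, b, hb, hax, hbx, .inr hs.symm⟩

theorem le_of_mem_insert_truncClosure {h : Fin n → ℕ} (hh : h ∈ insert C (truncClosure C G)) :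
    h ≤ C := by
  rcases hh with rfl | hh
  exacts [le_rfl, le_of_mem_truncClosure hh]

theorem truncAdd_mem_insert_truncClosure {h₁ h₂ : Fin n → ℕ}
    (hh₁ : h₁ ∈ insert C (truncClosure C G)) (hh₂ : h₂ ∈ insert C (truncClosure C G)) :
    C ⊓ (h₁ + h₂) ∈ insert C (truncClosure C G) := by
  rcases hh₁ with rfl | hh₁
  · exact .inl (inf_eq_left.mpr le_self_add)
  rcases hh₂ with rfl | hh₂
  · exact .inl (inf_eq_left.mpr le_add_self)
  exact .inr (.add hh₁ hh₂)

theorem inf_mem_insert_truncClosure {h₁ h₂ : Fin n → ℕ}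
    (hh₁ : h₁ ∈ insert C (truncClosure C G)) (hh₂ : h₂ ∈ insert C (truncClosure C G)) :
    h₁ ⊓ h₂ ∈ insert C (truncClosure C G) := by
  rcases hh₁ with rfl | hh₁
  · rwa [inf_eq_right.mpr (le_of_mem_insert_truncClosure hh₂)]
  rcases hh₂ with rfl | hh₂
  · rw [inf_eq_left.mpr (le_of_mem_truncClosure hh₁)]; exact .inr hh₁
  exact .inr (.inf hh₁ hh₂)

def InfSplit (C : Fin n → ℕ) (G : Set (Fin n → ℕ)) (x s : Fin n → ℕ) : Prop :=
  ∃ h ∈ insert C (truncClosure C G), ∃ w ∈ insert x {w | C ⊓ (x + 1) ≤ w}, s = h ⊓ w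

theorem apply_of_mem_insert_upper {w : Fin n → ℕ} (hw : w ∈ insert x {w | C ⊓ (x + 1) ≤ w})
    (i : Fin n) : w i = x i ∨ min (C i) (x i + 1) ≤ w i := by
  rcases hw with rfl | hw
  exacts [.inl rfl, .inr (hw i)]

theorem le_of_mem_insert_upper (hxC : x ≤ C) {w : Fin n → ℕ}
    (hw : w ∈ insert x {w | C ⊓ (x + 1) ≤ w}) : x ≤ w := by
  intro i
  have hwi := apply_of_mem_insert_upper hw i
  have hxi : x i ≤ C i := hxC i
  show x i ≤ w i
  omega

theorem InfSplit.le {s : Fin n → ℕ} (hs : InfSplit C G x s) : s ≤ C := by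
  obtain ⟨h, hh, w, -, rfl⟩ := hs
  exact inf_le_of_left_le (le_of_mem_insert_truncClosure hh)

theorem infSplit_zero : InfSplit C G x 0 :=
  ⟨0, .inr .zero, C, .inr (by simp), (inf_eq_left.mpr zero_le).symm⟩

theorem infSplit_of_mem {g : Fin n → ℕ} (hg : g ∈ G) : InfSplit C (G \ {x}) x (C ⊓ g) := by
  by_cases hgx : g = x
  · exact ⟨C, .inl rfl, x, .inl rfl, by rw [hgx]⟩
  · exact ⟨C ⊓ g, .inr (.of_mem ⟨hg, hgx⟩), C, .inr (by simp), by simp⟩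

theorem infSplit_inf (hxC : x ≤ C) {a b : Fin n → ℕ} (ha : InfSplit C G x a)
    (hb : InfSplit C G x b) : InfSplit C G x (a ⊓ b) := by
  obtain ⟨h₁, hh₁, w₁, hw₁, rfl⟩ := ha
  obtain ⟨h₂, hh₂, w₂, hw₂, rfl⟩ := hb
  refine ⟨h₁ ⊓ h₂, inf_mem_insert_truncClosure hh₁ hh₂, w₁ ⊓ w₂, ?_, inf_inf_inf_comm _ _ _ _⟩
  rcases hw₁ with rfl | hw₁
  · exact .inl (inf_eq_left.mpr (le_of_mem_insert_upper hxC hw₂))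
  rcases hw₂ with rfl | hw₂
  · exact .inl (inf_eq_right.mpr (le_of_mem_insert_upper hxC (.inr hw₁)))
  exact .inr (le_inf (α := Fin n → ℕ) hw₁ hw₂)

theorem infSplit_truncAdd {a b : Fin n → ℕ} (ha : InfSplit C G x a) (hb : InfSplit C G x b)
    (hapos : a ≠ 0 → ∀ i, 0 < a i) (hbpos : b ≠ 0 → ∀ i, 0 < b i) :
    InfSplit C G x (C ⊓ (a + b)) := by
  by_cases ha0 : a = 0
  · rwa [ha0, zero_add, inf_eq_right.mpr hb.le]
  by_cases hb0 : b = 0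
  · rwa [hb0, add_zero, inf_eq_right.mpr ha.le]
  have pa := hapos ha0
  have pb := hbpos hb0
  obtain ⟨h₁, hh₁, w₁, hw₁, rfl⟩ := ha
  obtain ⟨h₂, hh₂, w₂, hw₂, rfl⟩ := hb
  refine ⟨C ⊓ (h₁ + h₂), truncAdd_mem_insert_truncClosure hh₁ hh₂,
    C ⊓ (h₁ + w₂) ⊓ (C ⊓ (w₁ + h₂)) ⊓ (C ⊓ (w₁ + w₂)), .inr fun i => ?_, ?_⟩
  · have := pa i; have := pb i; have := apply_of_mem_insert_upper hw₁ i
    have := apply_of_mem_insert_upper hw₂ i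
    simp only [Pi.inf_apply, Pi.add_apply, Pi.one_apply] at *
    omega
  · funext i
    simp only [Pi.inf_apply, Pi.add_apply]
    omega

theorem infSplit_of_mem_truncClosure (hxC : x ≤ C)
    (hpos : ∀ a ∈ truncClosure C G, a ≠ 0 → ∀ i, 0 < a i) {s : Fin n → ℕ}
    (hs : s ∈ truncClosure C G) : InfSplit C (G \ {x}) x s := by
  induction hs with
  | of_mem hg => exact infSplit_of_mem hg
  | zero => exact infSplit_zero
  | add ha hb iha ihb => exact infSplit_truncAdd iha ihb (hpos _ ha) (hpos _ hb)
  | inf _ _ iha ihb => exact infSplit_inf hxC iha ihb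

theorem mem_truncClosure_of_eq_truncAdd {s₁ s₂ : Fin n → ℕ} (hs₁ : InfSplit C G x s₁)
    (hs₂ : InfSplit C G x s₂) (hs₁x : s₁ ≠ x) (hs₂x : s₂ ≠ x)
    (hpos₁ : s₁ ≠ 0 → ∀ i, 0 < s₁ i) (hpos₂ : s₂ ≠ 0 → ∀ i, 0 < s₂ i)
    (hx : x = C ⊓ (s₁ + s₂)) : x ∈ truncClosure C G := by
  have hs₁0 : s₁ ≠ 0 := by
    rintro rfl
    exact hs₂x (by rw [hx, zero_add, inf_eq_right.mpr hs₂.le])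
  have hs₂0 : s₂ ≠ 0 := by
    rintro rfl
    exact hs₁x (by rw [hx, add_zero, inf_eq_right.mpr hs₁.le])
  have p₁ := hpos₁ hs₁0
  have p₂ := hpos₂ hs₂0
  obtain ⟨h₁, hh₁, w₁, hw₁, rfl⟩ := hs₁
  obtain ⟨h₂, hh₂, w₂, hw₂, rfl⟩ := hs₂
  -- where `x i < C i`, positivity of both summands gives `s₁ i, s₂ i < x i ≤ w₁ i, w₂ i`
  have hxh : x = C ⊓ (h₁ + h₂) := by
    funext i
    have := congrFun hx i; have := p₁ i; have := p₂ i
    have := apply_of_mem_insert_upper hw₁ i; have := apply_of_mem_insert_upper hw₂ i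
    simp only [Pi.inf_apply, Pi.add_apply] at *
    omega
  rcases hh₁ with rfl | hh₁
  · refine absurd (funext fun i => ?_) hs₁x
    have := congrFun hxh i; have := apply_of_mem_insert_upper hw₁ i
    simp only [Pi.inf_apply, Pi.add_apply] at *
    omega
  rcases hh₂ with rfl | hh₂
  · refine absurd (funext fun i => ?_) hs₂x
    have := congrFun hxh i; have := apply_of_mem_insert_upper hw₂ i
    simp only [Pi.inf_apply, Pi.add_apply] at *
    omega
  exact hxh ▸ .add hh₁ hh₂

theorem mem_truncClosure_of_eq_inf {s₁ s₂ : Fin n → ℕ} (hs₁ : InfSplit C G x s₁)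
    (hs₂ : InfSplit C G x s₂) (hs₁x : s₁ ≠ x) (hs₂x : s₂ ≠ x) (hx : x = s₁ ⊓ s₂) :
    x ∈ truncClosure C G := by
  obtain ⟨h₁, hh₁, w₁, hw₁, rfl⟩ := hs₁
  obtain ⟨h₂, hh₂, w₂, hw₂, rfl⟩ := hs₂
  have hx₁ : x ≤ h₁ ⊓ w₁ := hx ▸ inf_le_left
  have hx₂ : x ≤ h₂ ⊓ w₂ := hx ▸ inf_le_right
  have hw₁x : w₁ ≠ x := fun h => hs₁x (le_antisymm (h ▸ inf_le_right) hx₁)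
  have hw₂x : w₂ ≠ x := fun h => hs₂x (le_antisymm (h ▸ inf_le_right) hx₂)
  have hh₁C := le_of_mem_insert_truncClosure hh₁
  have hh₂C := le_of_mem_insert_truncClosure hh₂
  -- where `x i < C i`, both `w₁ i` and `w₂ i` exceed `x i`, so the minimum is taken on the `h`s
  have hxh : x = h₁ ⊓ h₂ := by
    funext i
    have := congrFun hx i; have := hh₁C i; have := hh₂C i
    have := (hw₁.resolve_left hw₁x) i; have := (hw₂.resolve_left hw₂x) i
    simp only [Pi.inf_apply, Pi.add_apply, Pi.one_apply] at *
    omega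
  rcases hh₁ with rfl | hh₁
  · rw [inf_eq_right.mpr hh₂C] at hxh
    exact absurd (le_antisymm (hxh ▸ inf_le_left) hx₂) hs₂x
  rcases hh₂ with rfl | hh₂
  · rw [inf_eq_left.mpr hh₁C] at hxh
    exact absurd (le_antisymm (hxh ▸ inf_le_left) hx₁) hs₁x
  exact hxh ▸ .inf hh₁ hh₂

end removal

section minimal

variable {C x : Fin n → ℕ} {G : Set (Fin n → ℕ)}

theorem mem_truncClosure_diff_singleton (hpos : ∀ a ∈ truncClosure C G, a ≠ 0 → ∀ i, 0 < a i)
    (hx : x ∈ truncClosure C (truncClosure C G \ {x})) : x ∈ truncClosure C (G \ {x}) := by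
  by_cases hx0 : x = 0
  · exact hx0 ▸ .zero
  have hxC := le_of_mem_truncClosure hx
  have hsub : truncClosure C (truncClosure C G \ {x}) ⊆ truncClosure C G :=
    (truncClosure_mono Set.sdiff_subset).trans truncClosure_truncClosure.le
  obtain ⟨s₁, hs₁, s₂, hs₂, hs₁x, hs₂x, hsplit⟩ :=
    exists_eq_truncAdd_or_inf_of_mem_truncClosure hx hx0 fun t ht => by
      rw [inf_eq_right.mpr (le_of_mem_truncClosure ht.1)]
      exact ht.2
  have split₁ := infSplit_of_mem_truncClosure hxC hpos (hsub hs₁)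
  have split₂ := infSplit_of_mem_truncClosure hxC hpos (hsub hs₂)
  rcases hsplit with hx | hx
  · exact mem_truncClosure_of_eq_truncAdd split₁ split₂ hs₁x hs₂x (hpos _ (hsub hs₁))
      (hpos _ (hsub hs₂)) hx
  · exact mem_truncClosure_of_eq_inf split₁ split₂ hs₁x hs₂x hx

theorem truncClosure_diff_singleton_eq (hpos : ∀ a ∈ truncClosure C G, a ≠ 0 → ∀ i, 0 < a i)
    (hx : x ∈ truncClosure C (truncClosure C G \ {x})) :
    truncClosure C (G \ {x}) = truncClosure C G := by
  refine (truncClosure_mono Set.sdiff_subset).antisymm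
    (truncClosure_subset_truncClosure fun g hg => ?_)
  by_cases hgx : g = x
  · rw [hgx, inf_eq_right.mpr (le_of_mem_truncClosure hx)]
    exact mem_truncClosure_diff_singleton hpos hx
  · exact .of_mem ⟨hg, hgx⟩

theorem subset_of_minimal {A B : Set (Fin n → ℕ)}
    (hpos : ∀ a ∈ truncClosure C A, a ≠ 0 → ∀ i, 0 < a i)
    (hAC : A ⊆ {x | x ≤ C}) (hBC : B ⊆ {x | x ≤ C}) (hAB : truncClosure C A = truncClosure C B)
    (hAmin : ∀ A' ⊂ A, truncClosure C A' ≠ truncClosure C A) : A ⊆ B := by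
  intro a ha
  by_contra haB
  have hBsub : B ⊆ truncClosure C A \ {a} := fun b hb =>
    ⟨hAB ▸ mem_truncClosure_of_mem_of_le hb (hBC hb), fun h => haB (h ▸ hb)⟩
  have haB' : a ∈ truncClosure C (truncClosure C A \ {a}) :=
    truncClosure_mono hBsub (hAB ▸ mem_truncClosure_of_mem_of_le ha (hAC ha))
  exact hAmin _ (Set.sdiff_singleton_ssubset.mpr ha) (truncClosure_diff_singleton_eq hpos haB')

end minimal

theorem minimal_goodGenSys_unique_general {n : ℕ} (S : Set (Fin n → ℕ))
    (hloc : IsLocal S)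
    (C : Fin n → ℕ)
    (A B : Set (Fin n → ℕ))
    (hAbd : A ⊆ {x | x ≤ C}) (hBbd : B ⊆ {x | x ≤ C})
    (hA : IsGoodGenSys S C A) (hAmin : ∀ A' ⊂ A, ¬ IsGoodGenSys S C A')
    (hB : IsGoodGenSys S C B) (hBmin : ∀ B' ⊂ B, ¬ IsGoodGenSys S C B') :
    A = B := by
  simp only [IsGoodGenSys, goodClosureBd_eq_truncClosure] at hA hB hAmin hBmin
  have hpos : ∀ a ∈ {a ∈ S | a ≤ C}, a ≠ 0 → ∀ i, 0 < a i := fun a ha ha0 i =>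
    Nat.pos_of_ne_zero fun h => ha0 (hloc a ha.1 ⟨i, h⟩)
  refine (subset_of_minimal (hA ▸ hpos) hAbd hBbd (hA.trans hB.symm) ?_).antisymm
    (subset_of_minimal (hB ▸ hpos) hBbd hAbd (hB.trans hA.symm) ?_)
  · exact fun A' hA' => hA ▸ hAmin A' hA'
  · exact fun B' hB' => hB ▸ hBmin B' hB'

theorem minimal_goodGenSys_unique {n : ℕ} (S : Set (Fin n → ℕ))
    (hS : IsGoodSemigroup S) (hloc : IsLocal S)
    (C : Fin n → ℕ) (hC : IsConductor S C)
    (A B : Set (Fin n → ℕ))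
    (hAbd : A ⊆ {x | x ≤ C}) (hBbd : B ⊆ {x | x ≤ C})
    (hA : IsGoodGenSys S C A) (hAmin : ∀ A' ⊂ A, ¬ IsGoodGenSys S C A')
    (hB : IsGoodGenSys S C B) (hBmin : ∀ B' ⊂ B, ¬ IsGoodGenSys S C B') :
    A = B :=
  minimal_goodGenSys_unique_general S hloc C A B hAbd hBbd hA hAmin hB hBmin
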